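/- Suppose c ∈ F attains the minimum, i.e., L_{YX}(c) = ℓ_{YX}. Then for every w ∈ F, |c w c⁻¹|_X ≤ λ·|w|_Y + λ². -/

import Mathlib

/-- The word length of `g` with respect to `S ∪ S⁻¹`. -/
noncomputable def wordLength {G : Type*} [Group G] (S : Set G) (g : G) : ℕ :=
  sInf {m : ℕ | ∃ f : Fin m → G, (∀ i, f i ∈ S ∨ (f i)⁻¹ ∈ S) ∧ g = (List.ofFn f).prod}

/-- `X : ι → G` indexes a free basis of the group `G`. -/
def IsFreeBasis {G : Type*} [Group G] {ι : Type*} (X : ι → G) : Prop :=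
  Function.Bijective (FreeGroup.lift X : FreeGroup ι →* G)

/-- `L_{YX}(c) = max_{x ∈ X} |c⁻¹ x c|_Y`, the length of the morphism between unit roses
determined on vertices by `u ↦ u⋅c`. -/
noncomputable def morphismLength {F : Type*} [Group F] {n : ℕ}
    (X Y : Fin n → F) (c : F) : ℕ :=
  Finset.univ.sup fun i => wordLength (Set.range Y) (c⁻¹ * X i * c)

/-! Let `e` realize `ℓ_{XY}`, so that conjugation by `e` is `ℓ_{XY}`-Lipschitz from `|·|_Y` to
`|·|_X`. Then `t = c e` conjugates every `x ∈ X` to an element of `X`-length at most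
`ℓ_{XY} ℓ_{YX} ≤ λ²`. In a free group of rank at least two, however, some basis letter `x` not
starting the reduced word of `t` satisfies `|t⁻¹ x t|_X = 2|t|_X + 1`; hence `2|t|_X ≤ λ²`, and
`c w c⁻¹ = t (e⁻¹ w e) t⁻¹` gives the bound. Word lengths with respect to a free basis are
computed as lengths of reduced words in `FreeGroup`. -/

namespace FreeGroup

variable {α : Type*}

theorem isReduced_cons_of_ne {L : List (α × Bool)} (h : IsReduced L) (a : α × Bool)
    (ha : ∀ p ∈ L.head?, p.1 ≠ a.1) : IsReduced (a :: L) := by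
  cases L with
  | nil => exact .singleton
  | cons p L => exact isReduced_cons_cons.2 ⟨fun h' => absurd h'.symm (ha p rfl), h⟩

variable [DecidableEq α]

theorem IsReduced.invRev {L : List (α × Bool)} (h : IsReduced L) : IsReduced (invRev L) := by
  rw [isReduced_iff_reduce_eq, reduce_invRev, h.reduce_eq]

theorem norm_conj_of {z : FreeGroup α} {i : α} (hi : ∀ p ∈ z.toWord.head?, p.1 ≠ i) :
    (z⁻¹ * of i * z).norm = 2 * z.norm + 1 := by
  set L := z.toWord
  have hL : IsReduced L := isReduced_toWord
  -- `L` is reduced and does not start with `i^{±1}`, so nothing cancels in `L⁻¹ i L`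
  have hword : IsReduced (invRev L ++ [(i, true)] ++ L) := by
    refine IsReduced.append_overlap ?_ (isReduced_cons_of_ne hL _ hi) (List.cons_ne_nil _ _)
    have h := (isReduced_cons_of_ne hL (i, false) hi).invRev
    rwa [invRev_cons] at h
  have hz : z⁻¹ * of i * z = mk (invRev L ++ [(i, true)] ++ L) := by
    rw [← mul_mk, ← mul_mk, ← inv_mk, mk_toWord]; rfl
  rw [hz, norm, toWord_mk, hword.reduce_eq]
  change _ = 2 * L.length + 1
  simp only [List.length_append, invRev_length, List.length_singleton]
  omega

theorem exists_norm_conj_of [Nontrivial α] (z : FreeGroup α) :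
    ∃ i, (z⁻¹ * of i * z).norm = 2 * z.norm + 1 := by
  obtain ⟨i, hi⟩ : ∃ i : α, ∀ p ∈ z.toWord.head?, p.1 ≠ i := by
    cases z.toWord.head? with
    | none => exact ⟨Classical.arbitrary α, by simp⟩
    | some p => simpa [eq_comm] using exists_ne p.1
  exact ⟨i, norm_conj_of hi⟩

end FreeGroup

section WordLength

variable {G : Type*} [Group G]

theorem wordLength_eq_sInf_length (S : Set G) (g : G) :
    wordLength S g =
      sInf {m | ∃ L : List G, (∀ x ∈ L, x ∈ S ∨ x⁻¹ ∈ S) ∧ L.prod = g ∧ L.length = m} := by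
  refine congrArg sInf (Set.ext fun m => ⟨?_, ?_⟩)
  · rintro ⟨f, hf, rfl⟩
    exact ⟨List.ofFn f, by simpa [List.mem_ofFn] using hf, rfl, List.length_ofFn⟩
  · rintro ⟨L, hL, rfl, rfl⟩
    exact ⟨L.get, fun i => hL _ (L.get_mem i), by rw [List.ofFn_get]⟩

theorem wordLength_one (S : Set G) : wordLength S 1 = 0 :=
  Nat.eq_zero_of_le_zero (Nat.sInf_le ⟨Fin.elim0, fun i => i.elim0, by simp⟩)

variable {ι : Type*} [DecidableEq ι] {X : ι → G}

theorem norm_le_length_of_lift_eq_prod (hX : Function.Injective (FreeGroup.lift X))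
    {L : List G} (hL : ∀ x ∈ L, x ∈ Set.range X ∨ x⁻¹ ∈ Set.range X) {z : FreeGroup ι}
    (hz : FreeGroup.lift X z = L.prod) : z.norm ≤ L.length := by
  induction L generalizing z with
  | nil => simp [hX (hz.trans (map_one _).symm)]
  | cons x L ih =>
    obtain ⟨u, hu, hux⟩ : ∃ u : FreeGroup ι, u.norm ≤ 1 ∧ FreeGroup.lift X u = x := by
      rcases hL x (List.mem_cons_self ..) with ⟨j, rfl⟩ | ⟨j, hj⟩
      · exact ⟨.of j, by simp⟩
      · exact ⟨(.of j)⁻¹, by simp [hj]⟩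
    have hrest := ih (fun y hy => hL y (List.mem_cons_of_mem _ hy))
      (z := u⁻¹ * z) (by simp [hz, hux])
    calc z.norm = (u * (u⁻¹ * z)).norm := by rw [mul_inv_cancel_left]
      _ ≤ u.norm + (u⁻¹ * z).norm := FreeGroup.norm_mul_le _ _
      _ ≤ (x :: L).length := by simp only [List.length_cons]; omega

theorem wordLength_lift_eq_norm (hX : Function.Injective (FreeGroup.lift X)) (z : FreeGroup ι) :
    wordLength (Set.range X) (FreeGroup.lift X z) = z.norm := by
  rw [wordLength_eq_sInf_length]
  have hmem : z.norm ∈ {m | ∃ L : List G, (∀ x ∈ L, x ∈ Set.range X ∨ x⁻¹ ∈ Set.range X) ∧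
      L.prod = FreeGroup.lift X z ∧ L.length = m} := by
    refine ⟨z.toWord.map fun p => cond p.2 (X p.1) (X p.1)⁻¹, ?_, ?_, by simp [FreeGroup.norm]⟩
    · simp only [List.mem_map]
      rintro _ ⟨⟨j, _ | _⟩, -, rfl⟩ <;> simp
    · conv_rhs => rw [← FreeGroup.mk_toWord (x := z), FreeGroup.lift_mk]
  exact le_antisymm (Nat.sInf_le hmem) <| le_csInf ⟨_, hmem⟩ <| by
    rintro _ ⟨L, hL, hprod, rfl⟩
    exact norm_le_length_of_lift_eq_prod hX hL hprod.symm

namespace IsFreeBasis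

theorem wordLength_mul_le (hX : IsFreeBasis X) (g h : G) :
    wordLength (Set.range X) (g * h) ≤ wordLength (Set.range X) g + wordLength (Set.range X) h := by
  obtain ⟨x, rfl⟩ := hX.2 g
  obtain ⟨y, rfl⟩ := hX.2 h
  rw [← map_mul]
  simpa only [wordLength_lift_eq_norm hX.1] using FreeGroup.norm_mul_le x y

theorem wordLength_inv (hX : IsFreeBasis X) (g : G) :
    wordLength (Set.range X) g⁻¹ = wordLength (Set.range X) g := by
  obtain ⟨x, rfl⟩ := hX.2 g
  rw [← map_inv, wordLength_lift_eq_norm hX.1, wordLength_lift_eq_norm hX.1, FreeGroup.norm_inv_eq]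

theorem exists_wordLength_conj_eq (hX : IsFreeBasis X) [Nontrivial ι] (t : G) :
    ∃ i, wordLength (Set.range X) (t⁻¹ * X i * t) = 2 * wordLength (Set.range X) t + 1 := by
  obtain ⟨z, rfl⟩ := hX.2 t
  obtain ⟨i, hi⟩ := FreeGroup.exists_norm_conj_of z
  refine ⟨i, ?_⟩
  rw [← FreeGroup.lift_apply_of (f := X), ← map_inv, ← map_mul, ← map_mul,
    wordLength_lift_eq_norm hX.1, wordLength_lift_eq_norm hX.1, hi]

theorem wordLength_conj_le (hX : IsFreeBasis X) (t g : G) :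
    wordLength (Set.range X) (t * g * t⁻¹) ≤
      wordLength (Set.range X) g + 2 * wordLength (Set.range X) t := by
  have hmul := hX.wordLength_mul_le (t * g) t⁻¹
  have hinner := hX.wordLength_mul_le t g
  rw [hX.wordLength_inv] at hmul
  omega

theorem wordLength_map_le (hX : IsFreeBasis X) {H : Type*} [Group H] {κ : Type*}
    [DecidableEq κ] {Y : κ → H} (hY : IsFreeBasis Y) (φ : H →* G) {k : ℕ}
    (hφ : ∀ j, wordLength (Set.range X) (φ (Y j)) ≤ k) (w : H) :
    wordLength (Set.range X) (φ w) ≤ k * wordLength (Set.range Y) w := by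
  obtain ⟨z, rfl⟩ := hY.2 w
  rw [wordLength_lift_eq_norm hY.1, ← FreeGroup.mk_toWord (x := z), FreeGroup.norm,
    FreeGroup.toWord_mk, FreeGroup.isReduced_toWord.reduce_eq]
  induction z.toWord with
  | nil => simp [wordLength_one]
  | cons p L ih =>
    have hp : wordLength (Set.range X) (φ (FreeGroup.lift Y (FreeGroup.mk [p]))) ≤ k := by
      obtain ⟨j, _ | _⟩ := p
      · simpa [FreeGroup.lift_mk, hX.wordLength_inv] using hφ j
      · simpa [FreeGroup.lift_mk] using hφ j
    calc _ = wordLength (Set.range X)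
          (φ (FreeGroup.lift Y (FreeGroup.mk [p])) * φ (FreeGroup.lift Y (FreeGroup.mk L))) := by
          rw [← map_mul, ← map_mul, FreeGroup.mul_mk, List.singleton_append]
      _ ≤ k + k * L.length := (hX.wordLength_mul_le _ _).trans (add_le_add hp ih)
      _ = k * (p :: L).length := by rw [List.length_cons]; ring

end IsFreeBasis

end WordLength

section MorphismLength

variable {F : Type*} [Group F] {n : ℕ} {X Y : Fin n → F}

theorem wordLength_le_morphismLength (X Y : Fin n → F) (c : F) (i : Fin n) :
    wordLength (Set.range Y) (c⁻¹ * X i * c) ≤ morphismLength X Y c :=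
  Finset.le_sup (f := fun i => wordLength (Set.range Y) (c⁻¹ * X i * c)) (Finset.mem_univ i)

theorem wordLength_conj_le_morphismLength_mul (hX : IsFreeBasis X) (hY : IsFreeBasis Y)
    (e w : F) :
    wordLength (Set.range X) (e⁻¹ * w * e) ≤ morphismLength Y X e * wordLength (Set.range Y) w := by
  simpa using hX.wordLength_map_le hY (MulAut.conj e⁻¹).toMonoidHom
    (fun j => by simpa using wordLength_le_morphismLength Y X e j) w

theorem morphismLength_mul_le (hX : IsFreeBasis X) (hY : IsFreeBasis Y) (c e : F) :
    morphismLength X X (c * e) ≤ morphismLength Y X e * morphismLength X Y c :=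
  Finset.sup_le fun i _ => calc
    wordLength (Set.range X) ((c * e)⁻¹ * X i * (c * e))
        = wordLength (Set.range X) (e⁻¹ * (c⁻¹ * X i * c) * e) := by group
    _ ≤ morphismLength Y X e * wordLength (Set.range Y) (c⁻¹ * X i * c) :=
        wordLength_conj_le_morphismLength_mul hX hY e _
    _ ≤ morphismLength Y X e * morphismLength X Y c :=
        Nat.mul_le_mul_left _ (wordLength_le_morphismLength X Y c i)

theorem two_mul_wordLength_lt_morphismLength_self (hn : 2 ≤ n) (hX : IsFreeBasis X) (t : F) :
    2 * wordLength (Set.range X) t < morphismLength X X t := by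
  have : Nontrivial (Fin n) := Fin.nontrivial_iff_two_le.2 hn
  obtain ⟨i, hi⟩ := hX.exists_wordLength_conj_eq t
  have := wordLength_le_morphismLength X X t i
  omega

end MorphismLength

/-- Lemma 4.2 in vertex coordinates: if `c` realizes the minimal morphism length
`ℓ_{YX} = min_c L_{YX}(c)`, then `|c w c⁻¹|_X ≤ λ⋅|w|_Y + λ²` for all `w`, where
`λ = max (ℓ_{YX}, ℓ_{XY})`. -/
theorem wordLength_conj_of_minimal {F : Type*} [Group F] {n : ℕ} (hn : 2 ≤ n)
    (X Y : Fin n → F) (hX : IsFreeBasis X) (hY : IsFreeBasis Y)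
    (c : F) (hc : morphismLength X Y c = sInf (Set.range (morphismLength X Y)))
    (w : F) :
    wordLength (Set.range X) (c * w * c⁻¹) ≤
      (max (sInf (Set.range (morphismLength X Y))) (sInf (Set.range (morphismLength Y X)))) *
        wordLength (Set.range Y) w +
      (max (sInf (Set.range (morphismLength X Y))) (sInf (Set.range (morphismLength Y X)))) ^ 2 := by
  set lam := max (sInf (Set.range (morphismLength X Y))) (sInf (Set.range (morphismLength Y X)))
  obtain ⟨e, he⟩ : sInf (Set.range (morphismLength Y X)) ∈ Set.range (morphismLength Y X) :=
    Nat.sInf_mem (Set.range_nonempty _)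
  have hYX : morphismLength Y X e ≤ lam := he ▸ le_max_right _ _
  have hXY : morphismLength X Y c ≤ lam := hc ▸ le_max_left _ _
  have hce : 2 * wordLength (Set.range X) (c * e) ≤ lam ^ 2 := calc
    _ ≤ morphismLength X X (c * e) := (two_mul_wordLength_lt_morphismLength_self hn hX _).le
    _ ≤ morphismLength Y X e * morphismLength X Y c := morphismLength_mul_le hX hY c e
    _ ≤ lam ^ 2 := sq lam ▸ Nat.mul_le_mul hYX hXY
  calc wordLength (Set.range X) (c * w * c⁻¹)
      = wordLength (Set.range X) (c * e * (e⁻¹ * w * e) * (c * e)⁻¹) := by group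
    _ ≤ wordLength (Set.range X) (e⁻¹ * w * e) + 2 * wordLength (Set.range X) (c * e) :=
        hX.wordLength_conj_le _ _
    _ ≤ morphismLength Y X e * wordLength (Set.range Y) w + lam ^ 2 :=
        add_le_add (wordLength_conj_le_morphismLength_mul hX hY e w) hce
    _ ≤ lam * wordLength (Set.range Y) w + lam ^ 2 := by gcongr
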